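/- arXiv:1702.06401 — 2 statements merged into one kernel-verified Lean document; each statement's English description precedes it below -/
import Mathlib

section
/- Let H be a real Hilbert space with a continuous symmetric bilinear form a(·,·) that is coercive on the kernel Z of a bounded bilinear form b : H × M → ℝ (M a Hilbert space), where b satisfies the inf-sup condition: there is β > 0 with sup_{x ∈ H, x ≠ 0} b(x, m)/‖x‖_H ≥ β‖m‖_M for all m ∈ M. Then for every pair of bounded linear functionals f ∈ H', g ∈ M' the saddle point problem a(u, v) + b(v, p) = f(v) for all v ∈ H, b(u, q) = g(q) for all q ∈ M, admits a unique solution (u, p) ∈ H × M, and ‖u‖_H + ‖p‖_M ≤ C(‖f‖_{H'} + ‖g‖_{M'}) with C depending only on the continuity constants, the coercivity constant, and β. -/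
/-!
Write `b x m = ⟪B x, m⟫` for an operator `B : H → M`. The inf-sup condition says
`β ‖m‖ ≤ ‖B† m‖`, so `B B†` is coercive on `M` and, by Lax–Milgram, `B` maps the range of `B†`
onto `M`, hence the range of `B†` is all of `(ker B)ᗮ`. A solution is then
`u = u_g + z`, where `B u_g` represents `g` and `z ∈ ker B` solves the problem for `a` on `ker B`
(Lax–Milgram again), and `p` is the preimage under `B†` of the residual `f - a u ∈ (ker B)ᗮ`.
The a priori bound follows the same splitting for an arbitrary solution; uniqueness is the bound
applied to the difference of two solutions.
-/

open RealInnerProductSpace InnerProductSpace ContinuousLinearMap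
open scoped InnerProduct

theorem mul_le_of_mul_mul_self_le {c t K : ℝ} (hK : 0 ≤ K) (ht : 0 ≤ t)
    (h : c * t * t ≤ K * t) : c * t ≤ K := by
  rcases ht.eq_or_lt with rfl | ht
  · simpa using hK
  · exact le_of_mul_le_mul_right h ht

theorem iSup_inner_div_norm_le {H : Type*} [NormedAddCommGroup H] [InnerProductSpace ℝ H]
    (v : H) : ⨆ x : {x : H // x ≠ 0}, ⟪x.1, v⟫_ℝ / ‖x.1‖ ≤ ‖v‖ :=
  Real.iSup_le (fun _ => div_le_of_le_mul₀ (norm_nonneg _) (norm_nonneg _)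
    ((real_inner_le_norm _ _).trans_eq (mul_comm _ _))) (norm_nonneg v)

section

variable {H M : Type*} [NormedAddCommGroup H] [InnerProductSpace ℝ H]
  [NormedAddCommGroup M] [InnerProductSpace ℝ M]

theorem exists_mem_forall_apply_eq_of_coercive (Z : Submodule ℝ H) [CompleteSpace Z]
    (a : H →L[ℝ] H →L[ℝ] ℝ) {α : ℝ} (hα : 0 < α) (ha : ∀ z ∈ Z, α * ‖z‖ ^ 2 ≤ a z z)
    (F : H →L[ℝ] ℝ) : ∃ z ∈ Z, ∀ v ∈ Z, a z v = F v := by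
  have hcoer : IsCoercive (a.bilinearComp Z.subtypeL Z.subtypeL) :=
    ⟨α, hα, fun z => by simpa [pow_two, mul_assoc] using ha z z.2⟩
  set z := hcoer.continuousLinearEquivOfBilin.symm ((toDual ℝ Z).symm (F ∘L Z.subtypeL))
  refine ⟨z, z.2, fun v hv => ?_⟩
  have := hcoer.continuousLinearEquivOfBilin_apply z ⟨v, hv⟩
  rw [ContinuousLinearEquiv.apply_symm_apply, toDual_symm_apply] at this
  exact this.symm

variable (a : H →L[ℝ] H →L[ℝ] ℝ) (B : H →L[ℝ] M)

def IsSaddlePointSolution (f : H →L[ℝ] ℝ) (g : M →L[ℝ] ℝ) (u : H) (p : M) : Prop :=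
  (∀ v, a u v + ⟪B v, p⟫_ℝ = f v) ∧ ∀ q, ⟪B u, q⟫_ℝ = g q

variable {a B} {f : H →L[ℝ] ℝ} {g : M →L[ℝ] ℝ} {u : H} {p : M}

theorem IsSaddlePointSolution.apply_eq_of_mem_ker (h : IsSaddlePointSolution a B f g u p)
    {v : H} (hv : v ∈ B.ker) : a u v = f v := by
  simpa [show B v = 0 from hv] using h.1 v

theorem IsSaddlePointSolution.sub {u' : H} {p' : M} (h : IsSaddlePointSolution a B f g u p)
    (h' : IsSaddlePointSolution a B f g u' p') :
    IsSaddlePointSolution a B 0 0 (u - u') (p - p') := by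
  refine ⟨fun v => ?_, fun q => ?_⟩
  · simp only [map_sub, sub_apply, inner_sub_right, zero_apply]
    linarith [h.1 v, h'.1 v]
  · simp [inner_sub_left, h.2 q, h'.2 q]

variable [CompleteSpace M]

theorem exists_inner_apply_eq (b : H →L[ℝ] M →L[ℝ] ℝ) :
    ∃ B : H →L[ℝ] M, ∀ x m, ⟪B x, m⟫_ℝ = b x m :=
  ⟨(toDual ℝ M).symm.toContinuousLinearEquiv.toContinuousLinearMap ∘L b,
    fun _ _ => toDual_symm_apply⟩

variable [CompleteSpace H] {α β : ℝ}

theorem exists_apply_adjoint_eq_and_norm_le (hβ : 0 < β) (hB : ∀ m, β * ‖m‖ ≤ ‖(B†) m‖)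
    (y : M) : ∃ m, B ((B†) m) = y ∧ β * ‖(B†) m‖ ≤ ‖y‖ := by
  have hcoer : IsCoercive ((innerSL ℝ).bilinearComp (B†) (B†)) := by
    refine ⟨β ^ 2, by positivity, fun m => ?_⟩
    have := mul_self_le_mul_self (by positivity) (hB m)
    rw [bilinearComp_apply, innerSL_apply_apply, real_inner_self_eq_norm_mul_norm]
    linarith
  have he : ∀ m, hcoer.continuousLinearEquivOfBilin m = B ((B†) m) := fun m =>
    ext_inner_right ℝ fun n => by
      rw [hcoer.continuousLinearEquivOfBilin_apply, bilinearComp_apply, innerSL_apply_apply,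
        adjoint_inner_right]
  set m := hcoer.continuousLinearEquivOfBilin.symm y
  have hm : B ((B†) m) = y := by rw [← he, ContinuousLinearEquiv.apply_symm_apply]
  refine ⟨m, hm, mul_le_of_mul_mul_self_le (norm_nonneg y) (norm_nonneg _) ?_⟩
  calc β * ‖(B†) m‖ * ‖(B†) m‖ = β * ⟪y, m⟫_ℝ := by
        rw [← hm, ← adjoint_inner_right, real_inner_self_eq_norm_mul_norm, mul_assoc]
    _ ≤ ‖y‖ * (β * ‖m‖) := by nlinarith [real_inner_le_norm y m]
    _ ≤ ‖y‖ * ‖(B†) m‖ := mul_le_mul_of_nonneg_left (hB m) (norm_nonneg y)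

theorem exists_adjoint_eq_of_mem_orthogonal_ker (hβ : 0 < β) (hB : ∀ m, β * ‖m‖ ≤ ‖(B†) m‖)
    {w : H} (hw : w ∈ B.kerᗮ) : ∃ p, (B†) p = w := by
  obtain ⟨p, hp, -⟩ := exists_apply_adjoint_eq_and_norm_le hβ hB (B w)
  refine ⟨p, sub_eq_zero.mp ?_⟩
  have hker : (B†) p - w ∈ B.ker := by simp [hp]
  have hperp : (B†) p - w ∈ B.kerᗮ := by
    refine Submodule.sub_mem _ ?_ hw
    rw [orthogonal_ker]
    exact Submodule.le_topologicalClosure _ ⟨p, rfl⟩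
  simpa [Submodule.inf_orthogonal_eq_bot] using Submodule.mem_inf.mpr ⟨hker, hperp⟩

theorem exists_isSaddlePointSolution (hα : 0 < α) (hβ : 0 < β)
    (ha : ∀ x ∈ B.ker, α * ‖x‖ ^ 2 ≤ a x x) (hB : ∀ m, β * ‖m‖ ≤ ‖(B†) m‖)
    (f : H →L[ℝ] ℝ) (g : M →L[ℝ] ℝ) : ∃ u p, IsSaddlePointSolution a B f g u p := by
  have : CompleteSpace B.ker := (isClosed_ker B).completeSpace_coe
  obtain ⟨m, hm, -⟩ := exists_apply_adjoint_eq_and_norm_le hβ hB ((toDual ℝ M).symm g)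
  obtain ⟨z, hz, hza⟩ := exists_mem_forall_apply_eq_of_coercive B.ker a hα ha (f - a ((B†) m))
  set u := z + (B†) m
  have hu : (toDual ℝ H).symm (f - a u) ∈ B.kerᗮ := by
    refine (Submodule.mem_orthogonal _ _).mpr fun v hv => ?_
    rw [real_inner_comm, toDual_symm_apply]
    simp [u, hza v hv]
  obtain ⟨p, hp⟩ := exists_adjoint_eq_of_mem_orthogonal_ker hβ hB hu
  refine ⟨u, p, fun v => ?_, fun q => ?_⟩
  · rw [← adjoint_inner_right, hp, real_inner_comm, toDual_symm_apply]
    simp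
  · simp [u, show B z = 0 from hz, hm, toDual_symm_apply]

/-- With `Cᵤ = (A + α + β) / (α β)` one has `‖u‖ ≤ Cᵤ (‖f‖ + ‖g‖)` and
`‖p‖ ≤ (1 + A Cᵤ) / β (‖f‖ + ‖g‖)`. -/
noncomputable def brezziConstant (α β A : ℝ) : ℝ :=
  (A + α + β) / (α * β) * (1 + A / β) + 1 / β

namespace IsSaddlePointSolution

theorem toDual_adjoint_apply (h : IsSaddlePointSolution a B f g u p) :
    toDual ℝ H ((B†) p) = f - a u := by
  ext v
  rw [toDual_apply_apply, real_inner_comm, adjoint_inner_right, sub_apply, ← h.1 v]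
  ring

theorem norm_snd_le (h : IsSaddlePointSolution a B f g u p) (hB : ∀ m, β * ‖m‖ ≤ ‖(B†) m‖) :
    β * ‖p‖ ≤ ‖f‖ + ‖a‖ * ‖u‖ :=
  calc β * ‖p‖ ≤ ‖(B†) p‖ := hB p
    _ = ‖f - a u‖ := by rw [← h.toDual_adjoint_apply, LinearIsometryEquiv.norm_map]
    _ ≤ ‖f‖ + ‖a‖ * ‖u‖ := (norm_sub_le _ _).trans (add_le_add le_rfl (le_opNorm a u))

theorem norm_fst_le (h : IsSaddlePointSolution a B f g u p) (hα : 0 < α) (hβ : 0 < β)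
    (ha : ∀ x ∈ B.ker, α * ‖x‖ ^ 2 ≤ a x x) (hB : ∀ m, β * ‖m‖ ≤ ‖(B†) m‖) :
    α * β * ‖u‖ ≤ β * ‖f‖ + (‖a‖ + α) * ‖g‖ := by
  obtain ⟨m, hm, hmg⟩ := exists_apply_adjoint_eq_and_norm_le hβ hB ((toDual ℝ M).symm g)
  rw [LinearIsometryEquiv.norm_map] at hmg
  set ug := (B†) m
  have hz : u - ug ∈ B.ker := by
    refine ext_inner_right ℝ fun q => ?_
    simp [inner_sub_left, h.2 q, hm, toDual_symm_apply]
  have hzbound : α * ‖u - ug‖ ≤ ‖f‖ + ‖a‖ * ‖ug‖ := by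
    refine mul_le_of_mul_mul_self_le (by positivity) (norm_nonneg _) ?_
    calc α * ‖u - ug‖ * ‖u - ug‖ ≤ a (u - ug) (u - ug) := by
          simpa [pow_two, mul_assoc] using ha _ hz
      _ = f (u - ug) - a ug (u - ug) := by
          rw [map_sub a u ug, sub_apply, h.apply_eq_of_mem_ker hz]
      _ ≤ ‖f‖ * ‖u - ug‖ + ‖a‖ * ‖ug‖ * ‖u - ug‖ := by
          have hf := (le_abs_self _).trans (f.le_opNorm (u - ug))
          have ha' := (neg_le_abs _).trans ((a ug).le_opNorm (u - ug) |>.trans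
            (mul_le_mul_of_nonneg_right (a.le_opNorm ug) (norm_nonneg _)))
          linarith
      _ = (‖f‖ + ‖a‖ * ‖ug‖) * ‖u - ug‖ := by ring
  calc α * β * ‖u‖ ≤ α * β * (‖u - ug‖ + ‖ug‖) := by
        gcongr; exact norm_le_norm_sub_add u ug
    _ = β * (α * ‖u - ug‖) + α * β * ‖ug‖ := by ring
    _ ≤ β * (‖f‖ + ‖a‖ * ‖ug‖) + α * β * ‖ug‖ := by gcongr
    _ = β * ‖f‖ + (‖a‖ + α) * (β * ‖ug‖) := by ring
    _ ≤ β * ‖f‖ + (‖a‖ + α) * ‖g‖ := by gcongr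

theorem norm_add_norm_le (h : IsSaddlePointSolution a B f g u p) (hα : 0 < α) (hβ : 0 < β)
    (ha : ∀ x ∈ B.ker, α * ‖x‖ ^ 2 ≤ a x x) (hB : ∀ m, β * ‖m‖ ≤ ‖(B†) m‖) {A : ℝ}
    (hA : ‖a‖ ≤ A) : ‖u‖ + ‖p‖ ≤ brezziConstant α β A * (‖f‖ + ‖g‖) := by
  have hu := h.norm_fst_le hα hβ ha hB
  have hp := h.norm_snd_le hB
  have hA0 : 0 ≤ A := (norm_nonneg a).trans hA
  set Cu := (A + α + β) / (α * β)
  have hu' : ‖u‖ ≤ Cu * (‖f‖ + ‖g‖) := by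
    rw [div_mul_eq_mul_div, le_div_iff₀ (by positivity)]
    nlinarith [norm_nonneg f, norm_nonneg g, norm_nonneg u]
  have hp' : ‖p‖ ≤ (1 + A * Cu) / β * (‖f‖ + ‖g‖) := by
    rw [div_mul_eq_mul_div, le_div_iff₀ hβ]
    nlinarith [norm_nonneg f, norm_nonneg g, norm_nonneg u]
  calc ‖u‖ + ‖p‖ ≤ Cu * (‖f‖ + ‖g‖) + (1 + A * Cu) / β * (‖f‖ + ‖g‖) := add_le_add hu' hp'
    _ = brezziConstant α β A * (‖f‖ + ‖g‖) := by
        unfold brezziConstant; ring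

theorem unique {u' : H} {p' : M} (h : IsSaddlePointSolution a B f g u p)
    (h' : IsSaddlePointSolution a B f g u' p') (hα : 0 < α) (hβ : 0 < β)
    (ha : ∀ x ∈ B.ker, α * ‖x‖ ^ 2 ≤ a x x) (hB : ∀ m, β * ‖m‖ ≤ ‖(B†) m‖) :
    u = u' ∧ p = p' := by
  have := (h.sub h').norm_add_norm_le hα hβ ha hB le_rfl
  rw [norm_zero, norm_zero, add_zero, mul_zero] at this
  exact ⟨sub_eq_zero.mp (norm_le_zero_iff.mp (by linarith [norm_nonneg (p - p')])),
    sub_eq_zero.mp (norm_le_zero_iff.mp (by linarith [norm_nonneg (u - u')]))⟩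

end IsSaddlePointSolution

end

theorem stmt7_general (H M : Type*)
    [NormedAddCommGroup H] [InnerProductSpace ℝ H] [CompleteSpace H]
    [NormedAddCommGroup M] [InnerProductSpace ℝ M] [CompleteSpace M]
    (a : H →ₗ[ℝ] H →ₗ[ℝ] ℝ) (b : H →ₗ[ℝ] M →ₗ[ℝ] ℝ)
    (Ca Cb α β : ℝ) (hCa : 0 < Ca) (hα : 0 < α) (hβ : 0 < β)
    (ha_bdd : ∀ x y, |a x y| ≤ Ca * ‖x‖ * ‖y‖)
    (hb_bdd : ∀ x m, |b x m| ≤ Cb * ‖x‖ * ‖m‖)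
    (ha_coer : ∀ x : H, (∀ m, b x m = 0) → α * ‖x‖ ^ 2 ≤ a x x)
    (hb_infsup : ∀ m : M, β * ‖m‖ ≤ ⨆ x : {x : H // x ≠ 0}, b x.1 m / ‖x.1‖) :
    ∃ C : ℝ, 0 < C ∧ ∀ (f : H →L[ℝ] ℝ) (g : M →L[ℝ] ℝ),
      (∃! up : H × M, (∀ v, a up.1 v + b v up.2 = f v) ∧ (∀ q, b up.1 q = g q)) ∧
      (∀ (u : H) (p : M), (∀ v, a u v + b v p = f v) → (∀ q, b u q = g q) →
        ‖u‖ + ‖p‖ ≤ C * (‖f‖ + ‖g‖)) := by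
  set a' := a.mkContinuous₂ Ca fun x y => ha_bdd x y
  obtain ⟨B, hB⟩ := exists_inner_apply_eq (b.mkContinuous₂ Cb fun x m => hb_bdd x m)
  simp only [LinearMap.mkContinuous₂_apply] at hB
  have hsol : ∀ f g u p, IsSaddlePointSolution a' B f g u p ↔
      (∀ v, a u v + b v p = f v) ∧ ∀ q, b u q = g q := by
    simp [IsSaddlePointSolution, hB, a']
  have hcoer : ∀ x ∈ B.ker, α * ‖x‖ ^ 2 ≤ a' x x := fun x hx =>
    ha_coer x fun m => by rw [← hB, show B x = 0 from hx, inner_zero_left]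
  have hinfsup : ∀ m, β * ‖m‖ ≤ ‖(B†) m‖ := fun m => (hb_infsup m).trans <| by
    simpa only [← hB, ← adjoint_inner_right] using iSup_inner_div_norm_le ((B†) m)
  refine ⟨brezziConstant α β Ca, by unfold brezziConstant; positivity, fun f g => ⟨?_, ?_⟩⟩
  · obtain ⟨u, p, h⟩ := exists_isSaddlePointSolution hα hβ hcoer hinfsup f g
    refine ⟨(u, p), (hsol f g u p).mp h, fun ⟨u', p'⟩ h' => ?_⟩
    obtain ⟨rfl, rfl⟩ := ((hsol f g u' p').mpr h').unique h hα hβ hcoer hinfsup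
    rfl
  · exact fun u p h₁ h₂ => ((hsol f g u p).mpr ⟨h₁, h₂⟩).norm_add_norm_le hα hβ hcoer hinfsup
      (LinearMap.mkContinuous₂_norm_le _ hCa.le _)

/-- Brezzi's theorem for saddle point problems: continuity of a and b,
coercivity of a on the kernel of b, and the inf-sup condition for b imply
unique solvability of the saddle point problem with a stability constant
depending only on the continuity constants, the coercivity constant and β. -/
theorem stmt7 (H M : Type*)
    [NormedAddCommGroup H] [InnerProductSpace ℝ H] [CompleteSpace H]
    [NormedAddCommGroup M] [InnerProductSpace ℝ M] [CompleteSpace M]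
    (a : H →ₗ[ℝ] H →ₗ[ℝ] ℝ) (b : H →ₗ[ℝ] M →ₗ[ℝ] ℝ)
    (Ca Cb α β : ℝ) (hCa : 0 < Ca) (hCb : 0 < Cb) (hα : 0 < α) (hβ : 0 < β)
    (ha_bdd : ∀ x y, |a x y| ≤ Ca * ‖x‖ * ‖y‖)
    (ha_symm : ∀ x y, a x y = a y x)
    (hb_bdd : ∀ x m, |b x m| ≤ Cb * ‖x‖ * ‖m‖)
    (ha_coer : ∀ x : H, (∀ m, b x m = 0) → α * ‖x‖ ^ 2 ≤ a x x)
    (hb_infsup : ∀ m : M, β * ‖m‖ ≤ ⨆ x : {x : H // x ≠ 0}, b x.1 m / ‖x.1‖) :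
    ∃ C : ℝ, 0 < C ∧ ∀ (f : H →L[ℝ] ℝ) (g : M →L[ℝ] ℝ),
      (∃! up : H × M, (∀ v, a up.1 v + b v up.2 = f v) ∧ (∀ q, b up.1 q = g q)) ∧
      (∀ (u : H) (p : M), (∀ v, a u v + b v p = f v) → (∀ q, b u q = g q) →
        ‖u‖ + ‖p‖ ≤ C * (‖f‖ + ‖g‖)) :=
  stmt7_general H M a b Ca Cb α β hCa hα hβ ha_bdd hb_bdd ha_coer hb_infsup
end

section
/- Let V, Q be Hilbert spaces and b : V × Q → ℝ bounded. Suppose Q = Q₁ ⊕ Q₂ (topological direct sum with ‖q₁‖ + ‖q₂‖ ≤ c‖q‖), and suppose for each i = 1, 2 and each qᵢ ∈ Qᵢ there is vᵢ ∈ V with b(vᵢ, q₁ + q₂) ≥ ‖qᵢ‖² − ε‖q₁‖‖q₂‖ and ‖vᵢ‖ ≤ C‖qᵢ‖, where ε is small enough. Then b satisfies an inf-sup condition on V × Q with a constant depending only on c, C, ε. -/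
/-- Splitting argument for the inf-sup condition: if Q decomposes stably as
Q₁ + Q₂ and separate almost-orthogonal witnesses exist for each component,
then b satisfies an inf-sup condition with a constant depending only on
c, C, ε. -/
theorem stmt9 (V Q : Type*)
    [NormedAddCommGroup V] [InnerProductSpace ℝ V]
    [NormedAddCommGroup Q] [InnerProductSpace ℝ Q]
    (b : V →ₗ[ℝ] Q →ₗ[ℝ] ℝ) (Cb c C ε : ℝ)
    (hCb : 0 < Cb) (hc : 0 < c) (hC : 0 < C) (hε0 : 0 ≤ ε) (hε1 : ε < 1)
    (hb_bdd : ∀ v q, |b v q| ≤ Cb * ‖v‖ * ‖q‖)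
    (Q₁ Q₂ : Submodule ℝ Q)
    (hsplit : ∀ q : Q, ∃ q₁ ∈ Q₁, ∃ q₂ ∈ Q₂, q = q₁ + q₂ ∧ ‖q₁‖ + ‖q₂‖ ≤ c * ‖q‖)
    (hw₁ : ∀ q₁ ∈ Q₁, ∀ q₂ ∈ Q₂, ∃ v₁ : V,
      ‖q₁‖ ^ 2 - ε * ‖q₁‖ * ‖q₂‖ ≤ b v₁ (q₁ + q₂) ∧ ‖v₁‖ ≤ C * ‖q₁‖)
    (hw₂ : ∀ q₁ ∈ Q₁, ∀ q₂ ∈ Q₂, ∃ v₂ : V,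
      ‖q₂‖ ^ 2 - ε * ‖q₁‖ * ‖q₂‖ ≤ b v₂ (q₁ + q₂) ∧ ‖v₂‖ ≤ C * ‖q₂‖) :
    ∃ β : ℝ, 0 < β ∧
      ∀ q : Q, β * ‖q‖ ≤ ⨆ v : {v : V // v ≠ 0}, b v.1 q / ‖v.1‖ := by
  have hε : (0:ℝ) < 1 - ε := by linarith
  refine ⟨(1 - ε) / (2 * C * c), div_pos hε (by positivity), fun q => ?_⟩
  -- boundedness of the sup
  have hbdd : BddAbove (Set.range fun v : {v : V // v ≠ 0} => b v.1 q / ‖v.1‖) := by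
    refine ⟨Cb * ‖q‖, ?_⟩
    rintro x ⟨⟨v, hv⟩, rfl⟩
    have hvpos : (0:ℝ) < ‖v‖ := norm_pos_iff.mpr hv
    rw [div_le_iff₀ hvpos]
    calc b v q ≤ |b v q| := le_abs_self _
      _ ≤ Cb * ‖v‖ * ‖q‖ := hb_bdd v q
      _ = Cb * ‖q‖ * ‖v‖ := by ring
  rcases eq_or_ne q 0 with rfl | hq
  · simp only [norm_zero, mul_zero]
    rcases isEmpty_or_nonempty {v : V // v ≠ 0} with h | h
    · simp [ciSup_of_empty]
    · obtain ⟨v⟩ := h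
      refine le_trans ?_ (le_ciSup hbdd v)
      simp
  · obtain ⟨q₁, hq₁, q₂, hq₂, rfl, hnorm⟩ := hsplit q
    obtain ⟨v₁, hv₁b, hv₁n⟩ := hw₁ q₁ hq₁ q₂ hq₂
    obtain ⟨v₂, hv₂b, hv₂n⟩ := hw₂ q₁ hq₁ q₂ hq₂
    set v := v₁ + v₂ with hv
    have hqpos : (0:ℝ) < ‖q₁ + q₂‖ := norm_pos_iff.mpr hq
    have htri : ‖q₁ + q₂‖ ≤ ‖q₁‖ + ‖q₂‖ := norm_add_le _ _
    have hbv : (1 - ε) / 2 * ‖q₁ + q₂‖ ^ 2 ≤ b v (q₁ + q₂) := by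
      have : b v (q₁ + q₂) = b v₁ (q₁ + q₂) + b v₂ (q₁ + q₂) := by
        simp [hv]
      rw [this]
      have h1 : (0:ℝ) ≤ ‖q₁‖ := norm_nonneg _
      have h2 : (0:ℝ) ≤ ‖q₂‖ := norm_nonneg _
      have hsq : ‖q₁ + q₂‖ ^ 2 ≤ (‖q₁‖ + ‖q₂‖) ^ 2 :=
        pow_le_pow_left₀ (norm_nonneg _) htri 2
      have hsq' : (1 - ε) / 2 * ‖q₁ + q₂‖ ^ 2 ≤ (1 - ε) / 2 * (‖q₁‖ + ‖q₂‖) ^ 2 :=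
        mul_le_mul_of_nonneg_left hsq (by linarith)
      nlinarith [sq_nonneg (‖q₁‖ - ‖q₂‖),
        mul_nonneg hε0 (sq_nonneg (‖q₁‖ - ‖q₂‖)), mul_nonneg h1 h2]
    have hvn : ‖v‖ ≤ C * c * ‖q₁ + q₂‖ := by
      calc ‖v‖ ≤ ‖v₁‖ + ‖v₂‖ := norm_add_le _ _
        _ ≤ C * ‖q₁‖ + C * ‖q₂‖ := add_le_add hv₁n hv₂n
        _ = C * (‖q₁‖ + ‖q₂‖) := by ring
        _ ≤ C * (c * ‖q₁ + q₂‖) := by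
            exact mul_le_mul_of_nonneg_left hnorm (le_of_lt hC)
        _ = C * c * ‖q₁ + q₂‖ := by ring
    have hvne : v ≠ 0 := by
      intro h
      rw [h] at hbv
      simp only [map_zero, LinearMap.zero_apply] at hbv
      nlinarith [mul_pos hε (pow_pos hqpos 2)]
    refine le_trans ?_ (le_ciSup hbdd ⟨v, hvne⟩)
    have hvpos : (0:ℝ) < ‖v‖ := norm_pos_iff.mpr hvne
    rw [le_div_iff₀ hvpos]
    calc (1 - ε) / (2 * C * c) * ‖q₁ + q₂‖ * ‖v‖
        ≤ (1 - ε) / (2 * C * c) * ‖q₁ + q₂‖ * (C * c * ‖q₁ + q₂‖) := by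
          have h0 : (0:ℝ) ≤ (1 - ε) / (2 * C * c) * ‖q₁ + q₂‖ :=
            mul_nonneg (le_of_lt (div_pos hε (by positivity))) (norm_nonneg _)
          exact mul_le_mul_of_nonneg_left hvn h0
      _ = (1 - ε) / 2 * ‖q₁ + q₂‖ ^ 2 := by
          have hC' : (C:ℝ) ≠ 0 := ne_of_gt hC
          have hc' : (c:ℝ) ≠ 0 := ne_of_gt hc
          field_simp
      _ ≤ b v (q₁ + q₂) := hbv
end
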